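/- arXiv:2004.12180 — 3 statements merged into one kernel-verified Lean document; each statement's English description precedes it below -/
import Mathlib

section
/- Let λ > 0 be a real number and let H = x·A + y·B + z·C with x² + y² − z² = −λ² and z < 0. Then there exists M ∈ SL(2,ℝ) with M(−λC)M⁻¹ = H. (The lower sheet of the two-sheeted hyperboloid x² + y² − z² = −λ² is the adjoint orbit of −λC.) -/
noncomputable def A : Matrix (Fin 2) (Fin 2) ℝ := !![0, 1; 1, 0]
noncomputable def B : Matrix (Fin 2) (Fin 2) ℝ := !![1, 0; 0, -1]
noncomputable def C : Matrix (Fin 2) (Fin 2) ℝ := !![0, 1; -1, 0]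

/-!
In coordinates `H = !![y, x + z; x - z, -y]`, a trace-zero matrix with `det H = λ²`. On the lower
sheet the corner `x + z` is negative, so `a = √(-(x + z) / λ)` exists, and the unimodular
lower-triangular matrix `!![a, 0; y / (λ a), a⁻¹]` conjugates `-λC` to `H`; it suffices to check
`M (-λC) = H M` entrywise.
-/

theorem smul_A_add_smul_B_add_smul_C (x y z : ℝ) :
    x • A + y • B + z • C = !![y, x + z; x - z, -y] := by
  ext i j; fin_cases i <;> fin_cases j <;> simp [A, B, C, sub_eq_add_neg]

theorem conj_neg_smul_C {lam a p q r : ℝ} (hlam : lam ≠ 0) (ha : a ≠ 0)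
    (haq : lam * a ^ 2 = -q) (hdet : p ^ 2 + q * r = -lam ^ 2) :
    let M : Matrix (Fin 2) (Fin 2) ℝ := !![a, 0; p / (lam * a), a⁻¹]
    M * ((-lam) • C) * M⁻¹ = !![p, q; r, -p] := by
  intro M
  have hM : IsUnit M.det := by simp [M, Matrix.det_fin_two_of, ha]
  suffices M * ((-lam) • C) = !![p, q; r, -p] * M by
    rw [this, Matrix.mul_nonsing_inv_cancel_right _ _ hM]
  ext i j
  fin_cases i <;> fin_cases j <;> simp [M, C, Matrix.mul_apply] <;> field_simp
  · linear_combination (-p) * haq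
  · linear_combination -haq
  · linear_combination (-r) * haq + hdet

theorem exists_det_one_conj_neg_smul_C {lam p q r : ℝ} (hlam : 0 < lam) (hq : q < 0)
    (hdet : p ^ 2 + q * r = -lam ^ 2) :
    ∃ M : Matrix (Fin 2) (Fin 2) ℝ, M.det = 1 ∧ M * ((-lam) • C) * M⁻¹ = !![p, q; r, -p] := by
  have hqlam : 0 < -q / lam := div_pos (neg_pos.mpr hq) hlam
  set a := √(-q / lam)
  have ha : a ≠ 0 := (Real.sqrt_pos.mpr hqlam).ne'
  have haq : lam * a ^ 2 = -q := by
    rw [Real.sq_sqrt hqlam.le, mul_div_cancel₀ _ hlam.ne']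
  exact ⟨_, by simp [Matrix.det_fin_two_of, ha], conj_neg_smul_C hlam.ne' ha haq hdet⟩

/-- For `λ > 0`, every point `H = xA + yB + zC` of the lower sheet of the two-sheeted
hyperboloid `x² + y² − z² = −λ²` (i.e. with `z < 0`) lies in the adjoint orbit of `−λC`. -/
theorem lower_sheet_subset_adjoint_orbit_neg_lamC (lam x y z : ℝ) (hlam : 0 < lam)
    (hH : x ^ 2 + y ^ 2 - z ^ 2 = -lam ^ 2) (hz : z < 0) :
    ∃ M : Matrix (Fin 2) (Fin 2) ℝ, M.det = 1 ∧
      M * ((-lam) • C) * M⁻¹ = x • A + y • B + z • C := by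
  have hxz : x + z < 0 := by nlinarith [sq_nonneg y]
  rw [smul_A_add_smul_B_add_smul_C]
  exact exists_det_one_conj_neg_smul_C hlam hxz (by linear_combination hH)
end

section
/- Let D = A + C = !![0,2;0,0] and let H = x·A + y·B + z·C. Then there exists M ∈ SL(2,ℝ) with M·(−D)·M⁻¹ = H if and only if x² + y² − z² = 0 and z < 0. (The adjoint orbit of −D is the lower half of the cone x² + y² − z² = 0 with the origin removed.) -/
noncomputable def D : Matrix (Fin 2) (Fin 2) ℝ := A + C

namespace Matrix

variable {R : Type*} [CommRing R]

theorem inv_fin_two_of_det_eq_one {M : Matrix (Fin 2) (Fin 2) R} (hM : M.det = 1) :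
    M⁻¹ = !![M 1 1, -M 0 1; -M 1 0, M 0 0] := by
  rw [inv_def, hM, Ring.inverse_one, one_smul, adjugate_fin_two]

theorem conj_upperNilpotent_fin_two {M : Matrix (Fin 2) (Fin 2) R} (hM : M.det = 1) (t : R) :
    M * !![0, t; 0, 0] * M⁻¹ =
      !![-(t * M 0 0 * M 1 0), t * M 0 0 ^ 2; -(t * M 1 0 ^ 2), t * M 0 0 * M 1 0] := by
  rw [inv_fin_two_of_det_eq_one hM]
  ext i j
  fin_cases i <;> fin_cases j <;> simp [mul_apply, Fin.sum_univ_two] <;> ring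

theorem col_zero_ne_zero_of_det_eq_one [Nontrivial R] {M : Matrix (Fin 2) (Fin 2) R}
    (hM : M.det = 1) : M 0 0 ≠ 0 ∨ M 1 0 ≠ 0 := by
  by_contra! h
  simp [det_fin_two, h.1, h.2] at hM

theorem exists_det_eq_one_of_col_zero {K : Type*} [Field K] {a c : K} (h : a ≠ 0 ∨ c ≠ 0) :
    ∃ M : Matrix (Fin 2) (Fin 2) K, M.det = 1 ∧ M 0 0 = a ∧ M 1 0 = c := by
  rcases h with ha | hc
  · exact ⟨!![a, 0; c, a⁻¹], by simp [det_fin_two, ha], rfl, rfl⟩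
  · exact ⟨!![a, -c⁻¹; c, 0], by simp [det_fin_two, hc], rfl, rfl⟩

end Matrix

theorem neg_D : -D = !![0, -2; 0, 0] := by
  ext i j
  fin_cases i <;> fin_cases j <;> norm_num [D, A, C]

theorem conj_neg_D_eq_iff {M : Matrix (Fin 2) (Fin 2) ℝ} (hM : M.det = 1) (x y z : ℝ) :
    M * (-D) * M⁻¹ = x • A + y • B + z • C ↔
      2 * M 0 0 * M 1 0 = y ∧ -(2 * M 0 0 ^ 2) = x + z ∧ 2 * M 1 0 ^ 2 = x - z := by
  rw [neg_D, Matrix.conj_upperNilpotent_fin_two hM, smul_A_add_smul_B_add_smul_C,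
    ← Matrix.ext_iff]
  simp only [Fin.forall_fin_two, Fin.isValue, neg_mul, neg_neg, Matrix.of_apply,
    Matrix.cons_val', Matrix.cons_val_zero, Matrix.cons_val_fin_one, Matrix.cons_val_one, neg_inj]
  tauto

theorem exists_nullCone_param_iff (x y z : ℝ) :
    (∃ a c : ℝ, (a ≠ 0 ∨ c ≠ 0) ∧ 2 * a * c = y ∧ -(2 * a ^ 2) = x + z ∧ 2 * c ^ 2 = x - z) ↔
      x ^ 2 + y ^ 2 - z ^ 2 = 0 ∧ z < 0 := by
  constructor
  · rintro ⟨a, c, hac, hy, hxz, hxz'⟩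
    have hpos : 0 < a ^ 2 + c ^ 2 := by
      rcases hac with h | h <;> positivity
    have hx : x = c ^ 2 - a ^ 2 := by linarith
    have hz : z = -(a ^ 2 + c ^ 2) := by linarith
    subst hx hy hz
    exact ⟨by ring, by linarith⟩
  · rintro ⟨hcone, hz⟩
    obtain ⟨⟨a, c⟩, hw⟩ := IsAlgClosed.exists_eq_mul_self (⟨-x, y⟩ : ℂ)
    obtain ⟨hre, him⟩ := Complex.ext_iff.1 hw
    simp only [Complex.mul_re, Complex.mul_im] at hre him
    have hnorm : a ^ 2 + c ^ 2 = -z := by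
      have hsq : (a ^ 2 + c ^ 2) ^ 2 = (-z) ^ 2 := by
        linear_combination hcone + (x - (a * a - c * c)) * hre - (y + 2 * a * c) * him
      exact (pow_left_inj₀ (by positivity) (by linarith) two_ne_zero).1 hsq
    refine ⟨a, c, ?_, by linarith, by linarith, by linarith⟩
    by_contra! h
    obtain ⟨rfl, rfl⟩ := h
    norm_num at hnorm
    linarith

/-- The adjoint orbit of `−D = −(A + C)` under `SL(2,ℝ)` is the lower half
of the cone `x² + y² − z² = 0` (with the origin removed). -/
theorem adjoint_orbit_negD_eq_lower_cone (x y z : ℝ) :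
    (∃ M : Matrix (Fin 2) (Fin 2) ℝ, M.det = 1 ∧
        M * (-D) * M⁻¹ = x • A + y • B + z • C) ↔
      x ^ 2 + y ^ 2 - z ^ 2 = 0 ∧ z < 0 := by
  rw [← exists_nullCone_param_iff]
  constructor
  · rintro ⟨M, hdet, hM⟩
    exact ⟨M 0 0, M 1 0, Matrix.col_zero_ne_zero_of_det_eq_one hdet,
      (conj_neg_D_eq_iff hdet x y z).1 hM⟩
  · rintro ⟨a, c, hac, hxyz⟩
    obtain ⟨M, hdet, rfl, rfl⟩ := Matrix.exists_det_eq_one_of_col_zero hac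
    exact ⟨M, hdet, (conj_neg_D_eq_iff hdet x y z).2 hxyz⟩
end

section
/- Let H = x·A + y·B + z·C be a nonzero element of the Lie algebra sl(2,ℝ) of trace-zero real 2×2 matrices. Then the kernel of the adjoint map ad(H) : sl(2,ℝ) → sl(2,ℝ), X ↦ [H, X] = HX − XH, is the one-dimensional subspace ℝ·H, and the image of ad(H) is the two-dimensional subspace {a·A + b·B + c·C : a·x + b·y − c·z = 0}. -/
set_option maxHeartbeats 2000000 in
/-- For a nonzero `H = xA + yB + zC ∈ sl(2,ℝ)`, the kernel of `ad(H) : X ↦ [H,X]` on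
`sl(2,ℝ)` is the line `ℝ·H`, and its image is the plane
`{aA + bB + cC : ax + by − cz = 0}`. -/
theorem ker_and_image_of_ad (x y z : ℝ)
    (hH : x • A + y • B + z • C ≠ 0) :
    ({X : Matrix (Fin 2) (Fin 2) ℝ | X.trace = 0 ∧
        (x • A + y • B + z • C) * X - X * (x • A + y • B + z • C) = 0}
      = {X : Matrix (Fin 2) (Fin 2) ℝ | ∃ c : ℝ, X = c • (x • A + y • B + z • C)}) ∧
    ({Y : Matrix (Fin 2) (Fin 2) ℝ | ∃ X : Matrix (Fin 2) (Fin 2) ℝ, X.trace = 0 ∧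
        Y = (x • A + y • B + z • C) * X - X * (x • A + y • B + z • C)}
      = {Y : Matrix (Fin 2) (Fin 2) ℝ | ∃ a b c : ℝ,
          Y = a • A + b • B + c • C ∧ a * x + b * y - c * z = 0}) := by
  have hHmat : x • A + y • B + z • C = !![y, x+z; x-z, -y] := by
    ext i j; fin_cases i <;> fin_cases j <;> simp [A, B, C] <;> ring
  rw [hHmat] at hH
  have hxyz : ¬ (y = 0 ∧ x + z = 0 ∧ x - z = 0) := by
    rintro ⟨h1, h2, h3⟩
    apply hH
    have hx : x = 0 := by linarith
    have hz : z = 0 := by linarith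
    ext i j; fin_cases i <;> fin_cases j <;> simp [h1, hx, hz]
  constructor
  · ext X
    simp only [Set.mem_setOf_eq, hHmat]
    constructor
    · rintro ⟨htr, hcomm⟩
      have htr' : X 1 1 = -(X 0 0) := by
        simp [Matrix.trace, Matrix.diag, Fin.sum_univ_two] at htr
        linarith
      have h00 := congrFun (congrFun hcomm 0) 0
      have h01 := congrFun (congrFun hcomm 0) 1
      have h10 := congrFun (congrFun hcomm 1) 0
      simp [Matrix.mul_apply, Fin.sum_univ_two, Matrix.vecMul, dotProduct,
        Matrix.vecHead, Matrix.vecTail, htr'] at h00 h01 h10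
      have e1 : y * X 0 1 = (x + z) * X 0 0 := by linear_combination h01 / 2
      have e2 : y * X 1 0 = (x - z) * X 0 0 := by linear_combination -h10 / 2
      have e3 : (x + z) * X 1 0 = (x - z) * X 0 1 := by linear_combination h00
      by_cases hy : y ≠ 0
      · refine ⟨X 0 0 / y, ?_⟩
        ext i j
        fin_cases i <;> fin_cases j <;> simp [htr'] <;> field_simp <;> linarith
      · push_neg at hy
        subst hy
        by_cases hxz : x + z ≠ 0
        · have hP0 : X 0 0 = 0 := by
            have h : (x + z) * X 0 0 = 0 := by linarith
            rcases mul_eq_zero.mp h with h | h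
            · exact absurd h hxz
            · exact h
          refine ⟨X 0 1 / (x + z), ?_⟩
          ext i j
          fin_cases i <;> fin_cases j <;> simp [htr', hP0] <;> field_simp <;> linarith
        · push_neg at hxz
          have hxz2 : x - z ≠ 0 := fun h => hxyz ⟨rfl, hxz, h⟩
          have hP0 : X 0 0 = 0 := by
            have h : (x - z) * X 0 0 = 0 := by linarith
            rcases mul_eq_zero.mp h with h | h
            · exact absurd h hxz2
            · exact h
          have hQ0 : X 0 1 = 0 := by
            have h : (x - z) * X 0 1 = 0 := by
              rw [hxz] at e3; linarith
            rcases mul_eq_zero.mp h with h | h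
            · exact absurd h hxz2
            · exact h
          refine ⟨X 1 0 / (x - z), ?_⟩
          ext i j
          fin_cases i <;> fin_cases j <;> simp [htr', hP0, hQ0, hxz] <;> field_simp
    · rintro ⟨c, rfl⟩
      refine ⟨?_, ?_⟩
      · simp [Matrix.trace, Matrix.diag, Fin.sum_univ_two]
      · rw [Matrix.mul_smul, Matrix.smul_mul]; simp
  · ext Y
    simp only [Set.mem_setOf_eq, hHmat]
    constructor
    · rintro ⟨X, htr, rfl⟩
      have htr' : X 1 1 = -(X 0 0) := by
        simp [Matrix.trace, Matrix.diag, Fin.sum_univ_two] at htr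
        linarith
      refine ⟨y * (X 0 1 - X 1 0) - 2 * z * (X 0 0),
              (x + z) * X 1 0 - (x - z) * (X 0 1),
              y * (X 0 1 + X 1 0) - 2 * x * (X 0 0), ?_, by ring⟩
      ext i j
      fin_cases i <;> fin_cases j <;>
        simp [A, B, C, Matrix.mul_apply, Fin.sum_univ_two, Matrix.vecMul,
          dotProduct, Matrix.vecHead, Matrix.vecTail, htr'] <;> ring
    · rintro ⟨a, b, c, rfl, hrel⟩
      have hN : x ^ 2 + y ^ 2 + z ^ 2 ≠ 0 := by
        intro h
        have hx : x = 0 := by nlinarith [sq_nonneg x, sq_nonneg y, sq_nonneg z]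
        have hy : y = 0 := by nlinarith [sq_nonneg x, sq_nonneg y, sq_nonneg z]
        have hz : z = 0 := by nlinarith [sq_nonneg x, sq_nonneg y, sq_nonneg z]
        exact hxyz ⟨hy, by linarith, by linarith⟩
      obtain ⟨p, hp⟩ : ∃ p : ℝ, p = -(z*a + x*c)/(2*(x ^ 2 + y ^ 2 + z ^ 2)) := ⟨_, rfl⟩
      obtain ⟨q, hq⟩ : ∃ q : ℝ, q = (y*c + z*b + y*a - x*b)/(2*(x ^ 2 + y ^ 2 + z ^ 2)) := ⟨_, rfl⟩
      obtain ⟨r, hr⟩ : ∃ r : ℝ, r = (y*c + z*b - y*a + x*b)/(2*(x ^ 2 + y ^ 2 + z ^ 2)) := ⟨_, rfl⟩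
      refine ⟨!![p, q; r, -p], ?_, ?_⟩
      · simp [Matrix.trace, Matrix.diag, Fin.sum_univ_two]
      · ext i j
        fin_cases i <;> fin_cases j <;>
          simp [A, B, C, Matrix.mul_apply, Fin.sum_univ_two, Matrix.vecMul,
            dotProduct, Matrix.vecHead, Matrix.vecTail] <;>
          subst hp hq hr <;> field_simp <;>
          first
            | linear_combination (2*y) * hrel
            | linear_combination (-(2*y)) * hrel
            | linear_combination (x+z) * hrel
            | linear_combination (-(x+z)) * hrel
            | linear_combination (x-z) * hrel
            | linear_combination (-(x-z)) * hrel
            | linear_combination (2*(x+z)) * hrel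
            | linear_combination (-(2*(x+z))) * hrel
            | linear_combination (2*(x-z)) * hrel
            | linear_combination (-(2*(x-z))) * hrel
            | linear_combination y * hrel
            | linear_combination (-y) * hrel
            | ring
end
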